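/- Let Λ be a finite set of unit vectors in ℝ³ with Λ = −Λ. For each ξ ∈ Λ let A_ξ ∈ ℝ³ be a unit vector with A_ξ·ξ = 0 and A_{−ξ} = A_ξ, and let B_ξ := (A_ξ + i ξ×A_ξ)/√2 be the associated Beltrami vectors. Let λ ∈ ℝ and let (a_ξ)_{ξ∈Λ} be complex coefficients with a_{−ξ} = conj(a_ξ) for all ξ ∈ Λ, and define W : ℝ³ → ℂ³ by W(x) := Σ_{ξ∈Λ} a_ξ B_ξ e^{iλ ξ·x} (which is ℝ³-valued). Then W is a stationary solution of the Euler equations: for every i ∈ {1,2,3} and x ∈ ℝ³, Σ_{j=1}^{3} ∂_j ( W_i W_j )(x) = ∂_i ( |W|²/2 )(x), where |W|² := Σ_{k=1}^{3} W_k². -/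

import Mathlib

/-- The Beltrami vector `B = (A + i ξ×A)/√2 ∈ ℂ³` associated with unit vectors
`ξ, A ∈ ℝ³` with `A·ξ = 0`. The cross product is extended ℂ-bilinearly to `ℂ³`. -/
noncomputable def beltrami (ξ A : Fin 3 → ℝ) : Fin 3 → ℂ :=
  fun k =>
    ((A k : ℂ) + Complex.I * crossProduct (fun j => (ξ j : ℂ)) (fun j => (A j : ℂ)) k) /
      (Real.sqrt 2 : ℂ)

/-- The partial derivative `∂_j f` of a complex-valued function on `ℝ³`. -/
noncomputable def pdC (j : Fin 3) (f : (Fin 3 → ℝ) → ℂ) (x : Fin 3 → ℝ) : ℂ :=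
  fderiv ℝ f x (Pi.single j 1)

/-! Each wave `B_ξ e^{iλ ξ·x}` is divergence free, since `B_ξ · ξ = 0`, and is an eigenfield
of the curl with eigenvalue `λ`, since `ξ × B_ξ = -i B_ξ`; hence so is the superposition `W`.
Pointwise, `∑_j ∂_j (W_i W_j) = (div W) W_i + ((W·∇)W)_i` and, by the Lamb identity,
`(W·∇)W = ∇(|W|²/2) - W × curl W`. With `div W = 0` and `curl W = λ W` the defect
`W × λ W` vanishes. -/

open Matrix

section Curl

variable {R : Type*} [CommRing R]

/-- If `M k j` is `∂_j W_k`, then `jacobianCurl M` is `curl W`. -/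
def jacobianCurl : Matrix (Fin 3) (Fin 3) R →ₗ[R] Fin 3 → R where
  toFun M := ![M 2 1 - M 1 2, M 0 2 - M 2 0, M 1 0 - M 0 1]
  map_add' M N := by ext i; fin_cases i <;> simp <;> ring
  map_smul' c M := by ext i; fin_cases i <;> simp <;> ring

theorem jacobianCurl_vecMulVec (b v : Fin 3 → R) : jacobianCurl (vecMulVec b v) = v ⨯₃ b := by
  ext i; fin_cases i <;> simp [jacobianCurl, vecMulVec_apply, cross_apply] <;> ring

theorem mulVec_eq_vecMul_sub_cross_jacobianCurl (M : Matrix (Fin 3) (Fin 3) R) (w : Fin 3 → R) :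
    M *ᵥ w = w ᵥ* M - w ⨯₃ jacobianCurl M := by
  ext i
  fin_cases i <;>
    simp [jacobianCurl, mulVec, vecMul, dotProduct, Fin.sum_univ_three, cross_apply] <;> ring

end Curl

section Beltrami

variable {ξ A : Fin 3 → ℝ}

theorem beltrami_eq_smul :
    beltrami ξ A = (Real.sqrt 2 : ℂ)⁻¹ •
      ((fun j => (A j : ℂ)) +
        Complex.I • (fun j => (ξ j : ℂ)) ⨯₃ (fun j => (A j : ℂ))) := by
  ext k; simp [beltrami, div_eq_inv_mul]

theorem beltrami_dotProduct (hp : ∑ k, A k * ξ k = 0) :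
    beltrami ξ A ⬝ᵥ (fun j => (ξ j : ℂ)) = 0 := by
  have : (fun j => (A j : ℂ)) ⬝ᵥ (fun j => (ξ j : ℂ)) = 0 := by
    simp only [dotProduct]; exact_mod_cast hp
  rw [beltrami_eq_smul, smul_dotProduct, add_dotProduct, smul_dotProduct, this,
    dotProduct_comm, dot_self_cross]
  simp

theorem cross_beltrami (hu : ∑ k, ξ k ^ 2 = 1) (hp : ∑ k, A k * ξ k = 0) :
    (fun j => (ξ j : ℂ)) ⨯₃ beltrami ξ A = -Complex.I • beltrami ξ A := by
  set ξc : Fin 3 → ℂ := fun j => (ξ j : ℂ)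
  set Ac : Fin 3 → ℂ := fun j => (A j : ℂ)
  have hξξ : ξc ⬝ᵥ ξc = 1 := by simp only [ξc, dotProduct, ← sq]; exact_mod_cast hu
  have hξA : ξc ⬝ᵥ Ac = 0 := by
    simp only [ξc, Ac, dotProduct, mul_comm (ξ _ : ℂ)]; exact_mod_cast hp
  have hξξA : ξc ⨯₃ (ξc ⨯₃ Ac) = -Ac := by
    rw [cross_cross_eq_smul_sub_smul', hξA, hξξ]; simp
  rw [beltrami_eq_smul, map_smul, map_add, map_smul, hξξA]
  linear_combination (norm := module) Complex.I_sq • ((Real.sqrt 2 : ℂ)⁻¹ • ξc ⨯₃ Ac)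

end Beltrami

section PlaneWave

noncomputable def planeWave (lam : ℝ) (ξ x : Fin 3 → ℝ) : ℂ :=
  Complex.exp (Complex.I * lam * ∑ j, (ξ j : ℂ) * (x j : ℂ))

theorem hasFDerivAt_planeWave (lam : ℝ) (ξ x : Fin 3 → ℝ) :
    HasFDerivAt (planeWave lam ξ)
      (planeWave lam ξ x • (Complex.I * lam) •
        ∑ j, (ξ j : ℂ) • Complex.ofRealCLM.comp (ContinuousLinearMap.proj j)) x := by
  have hcoord (j : Fin 3) : HasFDerivAt (fun y : Fin 3 → ℝ => (y j : ℂ))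
      (Complex.ofRealCLM.comp (ContinuousLinearMap.proj j)) x :=
    (Complex.ofRealCLM.comp
      (ContinuousLinearMap.proj (R := ℝ) (φ := fun _ : Fin 3 => ℝ) j)).hasFDerivAt
  have hdot : HasFDerivAt (fun y : Fin 3 → ℝ => ∑ j, (ξ j : ℂ) * (y j : ℂ))
      (∑ j, (ξ j : ℂ) • Complex.ofRealCLM.comp (ContinuousLinearMap.proj j)) x :=
    HasFDerivAt.fun_sum fun j _ => (hcoord j).const_mul (ξ j : ℂ)
  exact (hdot.const_mul _).cexp

theorem pdC_planeWave (lam : ℝ) (ξ x : Fin 3 → ℝ) (j : Fin 3) :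
    pdC j (planeWave lam ξ) x = Complex.I * lam * ξ j * planeWave lam ξ x := by
  simp [pdC, (hasFDerivAt_planeWave lam ξ x).fderiv, Pi.single_apply, apply_ite]
  ring

theorem differentiable_planeWave (lam : ℝ) (ξ : Fin 3 → ℝ) :
    Differentiable ℝ (planeWave lam ξ) :=
  fun x => (hasFDerivAt_planeWave lam ξ x).differentiableAt

end PlaneWave

section Calculus

variable {f g : (Fin 3 → ℝ) → ℂ} {x : Fin 3 → ℝ}

theorem pdC_mul (hf : DifferentiableAt ℝ f x) (hg : DifferentiableAt ℝ g x) (j : Fin 3) :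
    pdC j (fun y => f y * g y) x = f x * pdC j g x + g x * pdC j f x := by
  simp [pdC, fderiv_fun_mul hf hg]

noncomputable def jacobianC (W : (Fin 3 → ℝ) → Fin 3 → ℂ) (x : Fin 3 → ℝ) :
    Matrix (Fin 3) (Fin 3) ℂ :=
  Matrix.of fun k j => pdC j (fun y => W y k) x

variable {W : (Fin 3 → ℝ) → Fin 3 → ℂ}

theorem sum_pdC_mul_eq (hW : ∀ k, DifferentiableAt ℝ (fun y => W y k) x) (i : Fin 3) :
    ∑ j, pdC j (fun y => W y i * W y j) x =
      (jacobianC W x *ᵥ W x) i + W x i * (jacobianC W x).trace := by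
  simp [pdC_mul (hW i) (hW _), Finset.sum_add_distrib, mulVec, dotProduct, trace, jacobianC,
    Finset.mul_sum, mul_comm]
  ring

theorem pdC_sum_sq_div_two (hW : ∀ k, DifferentiableAt ℝ (fun y => W y k) x) (i : Fin 3) :
    pdC i (fun y => (∑ k, W y k ^ 2) / 2) x = (W x ᵥ* jacobianC W x) i := by
  have hsq (k : Fin 3) : DifferentiableAt ℝ (fun y => W y k ^ 2) x := (hW k).pow 2
  simp_rw [pdC, div_eq_inv_mul]
  rw [fderiv_const_mul (DifferentiableAt.fun_sum fun k _ => hsq k),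
    fderiv_fun_sum fun k _ => hsq k]
  simp [fderiv_fun_pow 2 (hW _), vecMul, dotProduct, jacobianC, pdC, Finset.mul_sum, mul_assoc]

theorem sum_pdC_mul_eq_pdC_sum_sq_div_two (hW : ∀ k, DifferentiableAt ℝ (fun y => W y k) x)
    {c : ℂ} (hdiv : (jacobianC W x).trace = 0)
    (hcurl : jacobianCurl (jacobianC W x) = c • W x) (i : Fin 3) :
    ∑ j, pdC j (fun y => W y i * W y j) x = pdC i (fun y => (∑ k, W y k ^ 2) / 2) x := by
  rw [sum_pdC_mul_eq hW, pdC_sum_sq_div_two hW, hdiv, mul_zero, add_zero,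
    mulVec_eq_vecMul_sub_cross_jacobianCurl, hcurl, map_smul, cross_self, smul_zero, sub_zero]

end Calculus

section Superposition

variable (s : Finset (Fin 3 → ℝ)) (a : (Fin 3 → ℝ) → ℂ) (b : (Fin 3 → ℝ) → Fin 3 → ℂ)
  (lam : ℝ)

theorem differentiableAt_sum_planeWave (x : Fin 3 → ℝ) (k : Fin 3) :
    DifferentiableAt ℝ (fun y => ∑ ξ ∈ s, a ξ * b ξ k * planeWave lam ξ y) x :=
  DifferentiableAt.fun_sum fun ξ _ => ((differentiable_planeWave lam ξ) x).const_mul _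

theorem jacobianC_sum_planeWave (x : Fin 3 → ℝ) :
    jacobianC (fun y k => ∑ ξ ∈ s, a ξ * b ξ k * planeWave lam ξ y) x =
      ∑ ξ ∈ s, (Complex.I * lam * a ξ * planeWave lam ξ x) •
        vecMulVec (b ξ) (fun j => (ξ j : ℂ)) := by
  ext k j
  have hterm (ξ : Fin 3 → ℝ) :
      DifferentiableAt ℝ (fun y => a ξ * b ξ k * planeWave lam ξ y) x :=
    ((differentiable_planeWave lam ξ) x).const_mul _
  rw [jacobianC, of_apply, pdC, fderiv_fun_sum fun ξ _ => hterm ξ, Matrix.sum_apply]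
  simp only [FunLike.coe_sum, Finset.sum_apply]
  refine Finset.sum_congr rfl fun ξ _ => ?_
  rw [fderiv_const_mul ((differentiable_planeWave lam ξ) x), _root_.smul_apply,
    ← pdC, pdC_planeWave, Matrix.smul_apply, vecMulVec_apply, smul_eq_mul, smul_eq_mul]
  ring

end Superposition

theorem stmt_5_general (Λ : Finset (Fin 3 → ℝ))
    (hΛunit : ∀ ξ ∈ Λ, ∑ k, ξ k ^ 2 = 1)
    (A : (Fin 3 → ℝ) → Fin 3 → ℝ)
    (hAperp : ∀ ξ ∈ Λ, ∑ k, A ξ k * ξ k = 0)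
    (a : (Fin 3 → ℝ) → ℂ)
    (lam : ℝ)
    (W : (Fin 3 → ℝ) → Fin 3 → ℂ)
    (hW : ∀ x k, W x k = ∑ ξ ∈ Λ,
      a ξ * beltrami ξ (A ξ) k * Complex.exp (Complex.I * (lam : ℂ) * ∑ j, (ξ j : ℂ) * (x j : ℂ))) :
    ∀ (i : Fin 3) (x : Fin 3 → ℝ),
      ∑ j, pdC j (fun y => W y i * W y j) x =
        pdC i (fun y => (∑ k, W y k ^ 2) / 2) x := by
  intro i x
  obtain rfl : W = fun y k => ∑ ξ ∈ Λ, a ξ * beltrami ξ (A ξ) k * planeWave lam ξ y :=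
    funext₂ hW
  have hjac := jacobianC_sum_planeWave Λ a (fun ξ => beltrami ξ (A ξ)) lam x
  refine sum_pdC_mul_eq_pdC_sum_sq_div_two
    (differentiableAt_sum_planeWave Λ a (fun ξ => beltrami ξ (A ξ)) lam x) (c := lam) ?_ ?_ i
  · rw [hjac, trace_sum]
    refine Finset.sum_eq_zero fun ξ hξ => ?_
    rw [trace_smul, trace_vecMulVec, beltrami_dotProduct (hAperp ξ hξ), smul_zero]
  · rw [hjac, map_sum]
    ext k
    simp only [map_smul, jacobianCurl_vecMulVec, Finset.sum_apply, Pi.smul_apply, smul_eq_mul,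
      Finset.mul_sum]
    refine Finset.sum_congr rfl fun ξ hξ => ?_
    rw [cross_beltrami (hΛunit ξ hξ) (hAperp ξ hξ)]
    simp only [Pi.smul_apply, smul_eq_mul]
    linear_combination -(lam * a ξ * planeWave lam ξ x * beltrami ξ (A ξ) k) * Complex.I_sq

/-- A linear combination `W(x) = Σ_{ξ∈Λ} a_ξ B_ξ e^{iλ ξ·x}` of Beltrami waves with
`a_{-ξ} = conj(a_ξ)` is a stationary solution of the Euler equations:
`div(W ⊗ W) = ∇(|W|²/2)`. -/
theorem stmt_5 (Λ : Finset (Fin 3 → ℝ))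
    (hΛunit : ∀ ξ ∈ Λ, ∑ k, ξ k ^ 2 = 1) (hΛsym : ∀ ξ ∈ Λ, -ξ ∈ Λ)
    (A : (Fin 3 → ℝ) → Fin 3 → ℝ)
    (hAunit : ∀ ξ ∈ Λ, ∑ k, A ξ k ^ 2 = 1)
    (hAperp : ∀ ξ ∈ Λ, ∑ k, A ξ k * ξ k = 0)
    (hAeven : ∀ ξ ∈ Λ, A (-ξ) = A ξ)
    (a : (Fin 3 → ℝ) → ℂ) (ha : ∀ ξ ∈ Λ, a (-ξ) = starRingEnd ℂ (a ξ))
    (lam : ℝ)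
    (W : (Fin 3 → ℝ) → Fin 3 → ℂ)
    (hW : ∀ x k, W x k = ∑ ξ ∈ Λ,
      a ξ * beltrami ξ (A ξ) k * Complex.exp (Complex.I * (lam : ℂ) * ∑ j, (ξ j : ℂ) * (x j : ℂ))) :
    ∀ (i : Fin 3) (x : Fin 3 → ℝ),
      ∑ j, pdC j (fun y => W y i * W y j) x =
        pdC i (fun y => (∑ k, W y k ^ 2) / 2) x :=
  stmt_5_general Λ hΛunit A hAperp a lam W hW
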